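/- Let H be an infinite-dimensional Hilbert space. Then every continuous trace on K(H) is zero: if f is a bounded linear functional on the C*-algebra K(H) of compact operators with f(ab) = f(ba) for all a,b ∈ K(H), then f = 0. -/

import Mathlib

/-!
Write `x ⊗ y` for the rank-one operator `v ↦ ⟪y, v⟫ x`. For a unit vector `e`, the trace
identity applied to `x ⊗ y = (x ⊗ e)(e ⊗ y)` and `(e ⊗ y)(x ⊗ e) = ⟪y, x⟫ e ⊗ e` gives
`f (x ⊗ y) = ⟪y, x⟫ f (e ⊗ e)`. The orthogonal projection onto an `n`-dimensional subspace is a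
sum of `n` rank-one projections `bᵢ ⊗ bᵢ` and has norm at most `1`, so `n ‖f (e ⊗ e)‖ ≤ ‖f‖`
for every `n`; in infinite dimension this forces `f` to vanish on all rank-one operators.
Finally, `f` vanishes on every compact `T`, because `T` is a norm limit of the operators `P T`
with `P` a finite-rank orthogonal projection, and `P T = ∑ᵢ bᵢ ⊗ T† bᵢ`.
-/

variable (H : Type*) [NormedAddCommGroup H] [InnerProductSpace ℂ H] [CompleteSpace H]

/-- The algebra of compact operators on `H`, as a (non-unital, closed)
subalgebra of `B(H)`. -/
def compactOperators : NonUnitalSubalgebra ℂ (H →L[ℂ] H) where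
  carrier := {T : H →L[ℂ] H | IsCompactOperator T}
  add_mem' := by
    intro a b ha hb
    exact ha.add hb
  zero_mem' := isCompactOperator_zero
  smul_mem' := by
    intro c a ha
    exact ha.smul c
  mul_mem' := by
    intro a b ha hb
    exact ha.comp_clm b

open InnerProductSpace in
theorem isCompactOperator_rankOne {𝕜 E F : Type*} [RCLike 𝕜] [SeminormedAddCommGroup E]
    [InnerProductSpace 𝕜 E] [NormedAddCommGroup F] [NormedSpace 𝕜 F] (x : F) (y : E) :
    IsCompactOperator (rankOne 𝕜 x y) :=
  (isCompactOperator_of_locallyCompactSpace_rng (.toSpanSingleton 𝕜 x)).comp_clm (innerSL 𝕜 y)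

theorem Submodule.norm_sub_starProjection_le {𝕜 E : Type*} [RCLike 𝕜] [NormedAddCommGroup E]
    [InnerProductSpace 𝕜 E] {U : Submodule 𝕜 E} [U.HasOrthogonalProjection] (x : E) {y : E}
    (hy : y ∈ U) : ‖x - U.starProjection x‖ ≤ ‖x - y‖ := by
  rw [starProjection_minimal]
  exact ciInf_le ⟨0, Set.forall_mem_range.mpr fun _ => norm_nonneg _⟩ (⟨y, hy⟩ : U)

theorem IsCompactOperator.exists_norm_sub_starProjection_comp_le {𝕜 E F : Type*} [RCLike 𝕜]
    [SeminormedAddCommGroup E] [NormedSpace 𝕜 E] [NormedAddCommGroup F] [InnerProductSpace 𝕜 F]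
    {T : E →L[𝕜] F} (hT : IsCompactOperator T) {ε : ℝ} (hε : 0 < ε) :
    ∃ (V : Submodule 𝕜 F) (_ : FiniteDimensional 𝕜 V), ‖T - V.starProjection ∘L T‖ ≤ ε := by
  obtain ⟨K, hK, hTK⟩ := hT.image_closedBall_subset_compact 1
  obtain ⟨t, ht, hKt⟩ := Metric.totallyBounded_iff.mp hK.totallyBounded ε hε
  have := FiniteDimensional.span_of_finite 𝕜 ht
  refine ⟨Submodule.span 𝕜 t, this,
    ContinuousLinearMap.opNorm_le_of_unit_norm hε.le fun v hv => ?_⟩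
  obtain ⟨y, hy, hTvy⟩ := Set.mem_iUnion₂.mp (hKt (hTK ⟨v, by simp [hv], rfl⟩))
  calc ‖(T - (Submodule.span 𝕜 t).starProjection ∘L T) v‖
      = ‖T v - (Submodule.span 𝕜 t).starProjection (T v)‖ := rfl
    _ ≤ ‖T v - y‖ := Submodule.norm_sub_starProjection_le _ (Submodule.subset_span hy)
    _ ≤ ε := (mem_ball_iff_norm.mp hTvy).le

theorem exists_finiteDimensional_submodule_finrank_eq {K V : Type*} [DivisionRing K]
    [AddCommGroup V] [Module K V] (h : ¬ FiniteDimensional K V) (n : ℕ) :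
    ∃ W : Submodule K V, FiniteDimensional K W ∧ Module.finrank K W = n := by
  have hn : (n : Cardinal) ≤ Module.rank K V :=
    Cardinal.natCast_lt_aleph0.le.trans (not_lt.mp (mt Module.rank_lt_aleph0_iff.mp h))
  obtain ⟨v, hv⟩ := exists_linearIndependent_of_le_rank hn
  exact ⟨Submodule.span K (Set.range v), .span_of_finite K (Set.finite_range v),
    by simp [finrank_span_eq_card hv]⟩

namespace compactOperators

open scoped InnerProductSpace

variable {E : Type*} [NormedAddCommGroup E] [InnerProductSpace ℂ E]

noncomputable def rankOne (x y : E) : compactOperators E :=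
  ⟨InnerProductSpace.rankOne ℂ x y, isCompactOperator_rankOne x y⟩

theorem rankOne_mul (x y z w : E) : rankOne x y * rankOne z w = ⟪y, z⟫_ℂ • rankOne x w :=
  Subtype.ext (InnerProductSpace.rankOne_comp_rankOne x y z w)

theorem coe_sum_rankOne_self {V : Submodule ℂ E} [V.HasOrthogonalProjection] {ι : Type*}
    [Fintype ι] (b : OrthonormalBasis ι ℂ V) :
    ((∑ i, rankOne (b i : E) (b i) : compactOperators E) : E →L[ℂ] E) = V.starProjection := by
  simp [b.starProjection_eq_sum_rankOne, rankOne]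

theorem norm_sum_rankOne_self_le_one {V : Submodule ℂ E} [V.HasOrthogonalProjection] {ι : Type*}
    [Fintype ι] (b : OrthonormalBasis ι ℂ V) : ‖∑ i, rankOne (b i : E) (b i)‖ ≤ 1 :=
  (congrArg norm (coe_sum_rankOne_self b)).trans_le V.starProjection_norm_le

theorem map_rankOne_eq_inner_mul {F : Type*} [FunLike F (compactOperators E) ℂ]
    [LinearMapClass F ℂ (compactOperators E) ℂ] (f : F) (htr : ∀ a b, f (a * b) = f (b * a))
    {e : E} (he : ‖e‖ = 1) (x y : E) : f (rankOne x y) = ⟪y, x⟫_ℂ * f (rankOne e e) :=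
  calc f (rankOne x y) = f (rankOne x e * rankOne e y) := by
        rw [rankOne_mul, inner_self_eq_one_of_norm_eq_one he, one_smul]
    _ = f (rankOne e y * rankOne x e) := htr _ _
    _ = ⟪y, x⟫_ℂ * f (rankOne e e) := by rw [rankOne_mul, map_smul, smul_eq_mul]

variable [CompleteSpace E]

theorem dense_span_rankOne :
    Dense (Submodule.span ℂ (Set.range fun p : E × E => rankOne p.1 p.2) :
      Set (compactOperators E)) := by
  refine Metric.dense_iff.mpr fun T ε hε => ?_
  obtain ⟨V, _, hV⟩ := T.2.exists_norm_sub_starProjection_comp_le (half_pos hε)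
  let b := stdOrthonormalBasis ℂ V
  let S : compactOperators E :=
    ∑ i, rankOne (b i : E) (ContinuousLinearMap.adjoint (T : E →L[ℂ] E) (b i))
  have hS : (S : E →L[ℂ] E) = V.starProjection ∘L (T : E →L[ℂ] E) := by
    rw [← coe_sum_rankOne_self b]
    simp [S, ContinuousLinearMap.finsetSum_comp, InnerProductSpace.rankOne_comp, rankOne]
  refine ⟨S, ?_, Submodule.sum_mem _ fun i _ => Submodule.subset_span ⟨(_, _), rfl⟩⟩
  rw [Metric.mem_ball, dist_comm, dist_eq_norm]
  calc ‖T - S‖ = ‖(T : E →L[ℂ] E) - V.starProjection ∘L (T : E →L[ℂ] E)‖ := by rw [← hS]; rfl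
    _ < ε := hV.trans_lt (half_lt_self hε)

noncomputable instance : NormedSpace ℂ (compactOperators E) := SubmoduleClass.toNormedSpace _

theorem map_rankOne_self_eq_zero (hinf : ¬ FiniteDimensional ℂ E)
    (f : compactOperators E →L[ℂ] ℂ) (htr : ∀ a b, f (a * b) = f (b * a)) {e : E} (he : ‖e‖ = 1) :
    f (rankOne e e) = 0 := by
  have hbound : ∀ n : ℕ, n * ‖f (rankOne e e)‖ ≤ ‖f‖ := by
    intro n
    obtain ⟨W, _, hW⟩ := exists_finiteDimensional_submodule_finrank_eq hinf n
    let b := stdOrthonormalBasis ℂ W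
    have hfS : f (∑ i, rankOne (b i : E) (b i)) = n * f (rankOne e e) := by
      have hfb (i) : f (rankOne (b i : E) (b i)) = f (rankOne e e) := by
        rw [map_rankOne_eq_inner_mul f htr he,
          inner_self_eq_one_of_norm_eq_one (x := (b i : E)) (b.orthonormal.1 i), one_mul]
      simp [hfb, hW]
    calc n * ‖f (rankOne e e)‖ = ‖f (∑ i, rankOne (b i : E) (b i))‖ := by simp [hfS]
      _ ≤ ‖f‖ * ‖∑ i, rankOne (b i : E) (b i)‖ := f.le_opNorm _
      _ ≤ ‖f‖ := mul_le_of_le_one_right (norm_nonneg f) (norm_sum_rankOne_self_le_one b)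
  by_contra hne
  obtain ⟨n, hn⟩ := exists_nat_gt (‖f‖ / ‖f (rankOne e e)‖)
  rw [div_lt_iff₀ (norm_pos_iff.mpr hne)] at hn
  linarith [hbound n]

end compactOperators

theorem trace_on_compact_operators_eq_zero
    (hinf : ¬ FiniteDimensional ℂ H)
    (f : (compactOperators H) →L[ℂ] ℂ)
    (htr : ∀ a b : compactOperators H, f (a * b) = f (b * a)) :
    f = 0 := by
  have : Nontrivial H := not_subsingleton_iff_nontrivial.mp fun _ => hinf inferInstance
  obtain ⟨e, he⟩ := exists_norm_eq H zero_le_one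
  refine f.ext_on compactOperators.dense_span_rankOne ?_
  rintro _ ⟨⟨x, y⟩, rfl⟩
  rw [compactOperators.map_rankOne_eq_inner_mul f htr he,
    compactOperators.map_rankOne_self_eq_zero hinf f htr he, mul_zero]
  rfl
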